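/- arXiv:2206.09620 — 4 statements merged into one kernel-verified Lean document; each statement's English description precedes it below -/
import Mathlib

section
/- If Y₁, …, Yₙ are i.i.d. random variables with common distribution Q on a finite alphabet 𝒳, then for every ε > 0, the probability that the KL divergence of the empirical distribution from Q is at least ε satisfies P( D(Q̂_{Yⁿ}‖Q) ≥ ε ) ≤ (n+1)^{|𝒳|} e^{−nε}. -/
open MeasureTheory Filter Finset Set Topology
open scoped ENNReal NNReal ENat

namespace AHT

noncomputable section

variable {X : Type*}

/-- A probability distribution on a finite alphabet. -/
def IsDist [Fintype X] (P : X → ℝ) : Prop :=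
  (∀ x, 0 ≤ P x) ∧ ∑ x, P x = 1

/-- Kullback–Leibler divergence. -/
def KL [Fintype X] (P Q : X → ℝ) : ℝ :=
  ∑ a, P a * Real.log (P a / Q a)

/-- Bhattacharyya distance. -/
def Bhat [Fintype X] (Q0 Q1 : X → ℝ) : ℝ :=
  -Real.log (∑ x, (Q0 x) ^ ((1 : ℝ) / 2) * (Q1 x) ^ ((1 : ℝ) / 2))

/-- Empirical distribution (type) of the first `n` samples. -/
def emp [Fintype X] [DecidableEq X] (n : ℕ) (ω : ℕ → X) (a : X) : ℝ :=
  (((Finset.range n).filter fun k => ω k = a).card : ℝ) / n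

/-- Row-stochastic matrix (adversary channel). -/
def RowStoch [Fintype X] (A : X → X → ℝ) : Prop :=
  (∀ x y, 0 ≤ A x y) ∧ ∀ x, ∑ y, A x y = 1

/-- Output distribution of channel `A` when the input distribution is `P`. -/
def push [Fintype X] (P : X → ℝ) (A : X → X → ℝ) (y : X) : ℝ :=
  ∑ x, P x * A x y

/-- `μ` is the law of an i.i.d. sequence with one-dimensional marginal `Q`. -/
def IsIID [Fintype X] [MeasurableSpace X] (μ : Measure (ℕ → X)) (Q : X → ℝ) : Prop :=
  IsProbabilityMeasure μ ∧
    ∀ (n : ℕ) (v : Fin n → X),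
      μ {ω | ∀ k : Fin n, ω (k : ℕ) = v k} = ENNReal.ofReal (∏ k, Q (v k))

/-- Admissible adversary channels for hypothesis distribution `Pi`. -/
def Adm [Fintype X] (d : (X → ℝ) → (X → ℝ) → ℝ) (Δ : ℝ) (Pi : X → ℝ) :
    Set (X → X → ℝ) :=
  {A | RowStoch A ∧ d Pi (push Pi A) ≤ Δ ∧ ∀ y, 0 < push Pi A y}

/-- The constant `C = Σ_{n ≥ 1} e^{-n^{1-ζ}}` with `ζ = 0.85`. -/
def Cζ : ℝ := ∑' n : ℕ, Real.exp (-((n : ℝ) + 1) ^ (0.15 : ℝ))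

/-- The thresholds `γ_n` (with `K = |𝒳|`). -/
def gammaTh (K M : ℕ) (α : ℝ) (n : ℕ) : ℝ :=
  Real.log (Cζ / α) / n + 1 / (n : ℝ) ^ (0.85 : ℝ) +
    ((K : ℝ) * Real.log ((n : ℝ) + 1) + Real.log ((M : ℝ) - 1)) / n

/-- The statistic `Z_i^{(n)}`. -/
def Zstat [Fintype X] [DecidableEq X] {M : ℕ} (P : Fin M → X → ℝ)
    (d : (X → ℝ) → (X → ℝ) → ℝ) (Δ : ℝ) (i : Fin M) (n : ℕ) (ω : ℕ → X) : ℝ :=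
  sInf {r | ∃ j, j ≠ i ∧ ∃ A ∈ Adm d Δ (P j), r = KL (emp n ω) (push (P j) A)}

/-- The one-sided stopping times `T_i`. -/
def Ti [Fintype X] [DecidableEq X] {M : ℕ} (P : Fin M → X → ℝ)
    (d : (X → ℝ) → (X → ℝ) → ℝ) (Δ α : ℝ) (i : Fin M) (ω : ℕ → X) : ℕ∞ :=
  sInf {t : ℕ∞ | ∃ n : ℕ, t = (n : ℕ∞) ∧ 1 ≤ n ∧
    gammaTh (Fintype.card X) M α n ≤ Zstat P d Δ i n ω}

/-- The stopping time `T*`. -/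
def Tstar [Fintype X] [DecidableEq X] {M : ℕ} (P : Fin M → X → ℝ)
    (d : (X → ℝ) → (X → ℝ) → ℝ) (Δ α : ℝ) (ω : ℕ → X) : ℕ∞ :=
  ⨅ i, Ti P d Δ α i ω

/-- Expected value of an `ℕ∞`-valued stopping time. -/
def ExpT [MeasurableSpace X] (μ : Measure (ℕ → X)) (T : (ℕ → X) → ℕ∞) : ℝ :=
  (∫⁻ ω, ((T ω : ℕ∞) : ℝ≥0∞) ∂μ).toReal

/-- Thresholds in the binary non-aware setting. -/
def gammaNA (K : ℕ) (α : ℝ) (n : ℕ) : ℝ :=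
  Real.log (Cζ / α) / n + 1 / (n : ℝ) ^ (0.85 : ℝ) + (K : ℝ) * Real.log ((n : ℝ) + 1) / n

/-- Admissible common channels in the non-aware setting. -/
def AdmNA [Fintype X] (d : (X → ℝ) → (X → ℝ) → ℝ) (Δ : ℝ) (P0 P1 : X → ℝ) :
    Set (X → X → ℝ) :=
  {A | RowStoch A ∧ max (d P0 (push P0 A)) (d P1 (push P1 A)) ≤ Δ ∧
    (∀ y, 0 < push P0 A y) ∧ ∀ y, 0 < push P1 A y}

/-- The statistic `S_n` in the non-aware setting. -/
def Sstat [Fintype X] [DecidableEq X] (P0 P1 : X → ℝ)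
    (d : (X → ℝ) → (X → ℝ) → ℝ) (Δ : ℝ) (n : ℕ) (ω : ℕ → X) : ℝ :=
  sInf {r | ∃ A ∈ AdmNA d Δ P0 P1,
    r = max (KL (emp n ω) (push P0 A)) (KL (emp n ω) (push P1 A))}

/-- Stopping time `τ*` of the non-aware test. -/
def tauNA [Fintype X] [DecidableEq X] (P0 P1 : X → ℝ)
    (d : (X → ℝ) → (X → ℝ) → ℝ) (Δ α : ℝ) (ω : ℕ → X) : ℕ∞ :=
  sInf {t : ℕ∞ | ∃ n : ℕ, t = (n : ℕ∞) ∧ 1 ≤ n ∧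
    gammaNA (Fintype.card X) α n ≤ Sstat P0 P1 d Δ n ω}

/-- A sequential test: a stopping time together with an `F_T`-measurable decision,
expressed functionally (the stopping decision and the final decision depend only on
the samples observed up to the stopping time). -/
structure SeqTest (X : Type*) (M : ℕ) where
  T : (ℕ → X) → ℕ∞
  dec : (ℕ → X) → Fin M
  adapted : ∀ ω ω' : ℕ → X, ∀ n : ℕ, T ω = (n : ℕ∞) →
    (∀ k < n, ω k = ω' k) → T ω' = (n : ℕ∞) ∧ dec ω' = dec ω

/-- Membership in the decision maker's strategy set `𝒮_D(α)`: all error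
probabilities are at most `α` whatever admissible strategy the adversary uses,
and the expected stopping times are finite. -/
def InSD [Fintype X] [MeasurableSpace X] {M : ℕ} (P : Fin M → X → ℝ)
    (d : (X → ℝ) → (X → ℝ) → ℝ) (Δ α : ℝ) (Φ : SeqTest X M) : Prop :=
  ∀ B : Fin M → X → X → ℝ, (∀ i, B i ∈ Adm d Δ (P i)) →
    ∀ ν : Fin M → Measure (ℕ → X), (∀ i, IsIID (ν i) (push (P i) (B i))) →
      ∀ i, ν i {ω | Φ.dec ω ≠ i} ≤ ENNReal.ofReal α ∧
        ∫⁻ ω, ((Φ.T ω : ℕ∞) : ℝ≥0∞) ∂(ν i) < ⊤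

/-!
Method of types. A word `v` of length `n` with type `P̂` has i.i.d. probability
`Qⁿ(v) = ∏ₐ Q(a)^{n P̂(a)} = e^{-n D(P̂‖Q)} P̂ⁿ(v)` (an inequality when `Q` vanishes on a letter
of `v`). Summed over the type class of `P̂`, `P̂ⁿ` is at most `1`, and there are at most
`(n+1)^{|𝒳|}` types. Hence the words whose type is at divergence `≥ ε` from `Q` carry
`Qⁿ`-mass at most `(n+1)^{|𝒳|} e^{-nε}`, and the event of the theorem is a union of cylinders
over such words.
-/

theorem pow_le_exp_mul_pow {p q : ℝ} {c : ℕ} (hq : 0 ≤ q) (hp : c ≠ 0 → 0 < p) :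
    q ^ c ≤ Real.exp (-(c * Real.log (p / q))) * p ^ c := by
  rcases eq_or_ne c 0 with rfl | hc
  · simp
  rcases hq.eq_or_lt with rfl | hq
  · rw [zero_pow hc]
    exact mul_nonneg (Real.exp_nonneg _) (pow_nonneg (hp hc).le _)
  have hp := hp hc
  rw [← mul_neg, ← Real.log_inv, inv_div, Real.exp_nat_mul, Real.exp_log (div_pos hq hp), div_pow,
    div_mul_cancel₀ _ (pow_ne_zero _ hp.ne')]

section MethodOfTypes

variable {n : ℕ}

/-- The i.i.d. probability `Pⁿ(v)` of a word `v` of length `n`. -/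
def seqProb (P : X → ℝ) (v : Fin n → X) : ℝ :=
  ∏ k, P (v k)

theorem seqProb_nonneg {P : X → ℝ} (hP : ∀ a, 0 ≤ P a) (v : Fin n → X) : 0 ≤ seqProb P v :=
  prod_nonneg fun k _ => hP (v k)

section

variable [Fintype X]

theorem sum_seqProb_le_one {P : X → ℝ} (hP : ∀ a, 0 ≤ P a) (hP1 : ∑ a, P a ≤ 1) :
    ∑ v : Fin n → X, seqProb P v ≤ 1 := by
  unfold seqProb
  rw [← Fintype.sum_pow]
  exact pow_le_one₀ (sum_nonneg fun a _ => hP a) hP1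

theorem IsIID.measure_le_sum_seqProb [MeasurableSpace X] {μ : Measure (ℕ → X)} {Q : X → ℝ}
    (hμ : IsIID μ Q) (hQ : ∀ a, 0 ≤ Q a) (S : Finset (Fin n → X)) :
    μ {ω | (fun k : Fin n => ω k) ∈ S} ≤ ENNReal.ofReal (∑ v ∈ S, seqProb Q v) :=
  calc μ {ω | (fun k : Fin n => ω k) ∈ S}
      = μ (⋃ v ∈ S, {ω | ∀ k : Fin n, ω k = v k}) := by
        congr 1
        ext ω
        simp only [Set.mem_iUnion, exists_prop]
        refine ⟨fun h => ⟨_, h, fun _ => rfl⟩, fun ⟨v, hv, h⟩ => ?_⟩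
        rwa [← funext h] at hv
    _ ≤ ∑ v ∈ S, μ {ω | ∀ k : Fin n, ω k = v k} := measure_biUnion_finset_le S _
    _ = ∑ v ∈ S, ENNReal.ofReal (seqProb Q v) := sum_congr rfl fun v _ => hμ.2 n v
    _ = ENNReal.ofReal (∑ v ∈ S, seqProb Q v) :=
        (ENNReal.ofReal_sum_of_nonneg fun v _ => seqProb_nonneg hQ v).symm

end

variable [DecidableEq X]

def typeCount (v : Fin n → X) (a : X) : ℕ :=
  #{k | v k = a}

/-- The type `P̂_v` of a word `v`; for the empty word it is `0`. -/
def typeDist (v : Fin n → X) (a : X) : ℝ :=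
  typeCount v a / n

theorem typeCount_le (v : Fin n → X) (a : X) : typeCount v a ≤ n :=
  (card_filter_le _ _).trans (card_fin n).le

theorem typeDist_nonneg (v : Fin n → X) (a : X) : 0 ≤ typeDist v a := by
  unfold typeDist
  positivity

theorem typeDist_pos {v : Fin n → X} {a : X} (ha : typeCount v a ≠ 0) : 0 < typeDist v a := by
  have hn : 0 < n := by have := typeCount_le v a; omega
  unfold typeDist
  positivity

theorem natCast_mul_typeDist (v : Fin n → X) (a : X) : (n : ℝ) * typeDist v a = typeCount v a := by
  rcases eq_or_ne n 0 with rfl | hn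
  · simp [typeCount]
  · exact mul_div_cancel₀ _ (Nat.cast_ne_zero.2 hn)

variable [Fintype X]

theorem sum_typeCount (v : Fin n → X) : ∑ a, typeCount v a = n := by
  simpa [typeCount] using
    (card_eq_sum_card_fiberwise (s := univ) (t := univ) fun k _ => mem_univ (v k)).symm

theorem sum_typeDist_le_one (v : Fin n → X) : ∑ a, typeDist v a ≤ 1 := by
  simp only [typeDist, ← sum_div, ← Nat.cast_sum, sum_typeCount]
  exact div_self_le_one _

theorem seqProb_eq_prod_pow (P : X → ℝ) (v : Fin n → X) :
    seqProb P v = ∏ a, P a ^ typeCount v a := by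
  rw [seqProb, ← prod_fiberwise univ v]
  refine prod_congr rfl fun a _ => ?_
  rw [typeCount, ← prod_const]
  exact prod_congr rfl fun k hk => by rw [(mem_filter.1 hk).2]

theorem card_image_typeCount_le :
    #(univ.image (typeCount : (Fin n → X) → X → ℕ)) ≤ (n + 1) ^ Fintype.card X := by
  calc #(univ.image (typeCount : (Fin n → X) → X → ℕ))
      ≤ #(Fintype.piFinset fun _ : X => range (n + 1)) := card_le_card ?_
    _ = (n + 1) ^ Fintype.card X := by simp
  intro θ hθ
  obtain ⟨v, -, rfl⟩ := mem_image.1 hθ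
  simpa [Nat.lt_succ_iff] using typeCount_le v

theorem sum_seqProb_typeDist_le :
    ∑ v : Fin n → X, seqProb (typeDist v) v ≤ ((n : ℝ) + 1) ^ Fintype.card X := by
  rw [← sum_fiberwise_of_maps_to (g := typeCount) (t := univ.image typeCount)
    fun v _ => mem_image_of_mem _ (mem_univ v)]
  calc _ ≤ ∑ _θ ∈ univ.image (typeCount : (Fin n → X) → X → ℕ), (1 : ℝ) :=
        sum_le_sum fun θ hθ => ?_
    _ ≤ ((n : ℝ) + 1) ^ Fintype.card X := by
        simpa using (Nat.cast_le (α := ℝ)).2 card_image_typeCount_le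
  obtain ⟨w, -, rfl⟩ := mem_image.1 hθ
  -- on the type class of `w` the summand is `P̂_wⁿ`, a probability distribution on words
  have htype : ∀ v ∈ ({v | typeCount v = typeCount w} : Finset (Fin n → X)),
      seqProb (typeDist v) v = seqProb (typeDist w) v := fun v hv => by
    unfold typeDist
    rw [(mem_filter.1 hv).2]
  rw [sum_congr rfl htype]
  exact (sum_le_univ_sum_of_nonneg fun v => seqProb_nonneg (typeDist_nonneg w) v).trans
    (sum_seqProb_le_one (typeDist_nonneg w) (sum_typeDist_le_one w))

theorem seqProb_le_exp_mul_seqProb_typeDist {Q : X → ℝ} (hQ : ∀ a, 0 ≤ Q a) (v : Fin n → X) :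
    seqProb Q v ≤ Real.exp (-(n * KL (typeDist v) Q)) * seqProb (typeDist v) v := by
  have hKL : (n : ℝ) * KL (typeDist v) Q =
      ∑ a, typeCount v a * Real.log (typeDist v a / Q a) := by
    rw [KL, mul_sum]
    exact sum_congr rfl fun a _ => by rw [← mul_assoc, natCast_mul_typeDist]
  rw [hKL, ← sum_neg_distrib, Real.exp_sum, seqProb_eq_prod_pow, seqProb_eq_prod_pow,
    ← prod_mul_distrib]
  exact prod_le_prod (fun a _ => pow_nonneg (hQ a) _) fun a _ =>
    pow_le_exp_mul_pow (hQ a) typeDist_pos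

theorem sum_seqProb_le_of_le_KL {Q : X → ℝ} (hQ : ∀ a, 0 ≤ Q a) (ε : ℝ) :
    ∑ v : Fin n → X with ε ≤ KL (typeDist v) Q, seqProb Q v ≤
      ((n : ℝ) + 1) ^ Fintype.card X * Real.exp (-(n * ε)) := by
  calc ∑ v : Fin n → X with ε ≤ KL (typeDist v) Q, seqProb Q v
      ≤ ∑ v : Fin n → X with ε ≤ KL (typeDist v) Q,
          Real.exp (-(n * ε)) * seqProb (typeDist v) v := by
        refine sum_le_sum fun v hv => (seqProb_le_exp_mul_seqProb_typeDist hQ v).trans ?_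
        gcongr
        · exact seqProb_nonneg (typeDist_nonneg v) v
        · exact (mem_filter.1 hv).2
    _ ≤ Real.exp (-(n * ε)) * ∑ v : Fin n → X, seqProb (typeDist v) v := by
        rw [← mul_sum]
        gcongr
        · exact fun v _ _ => seqProb_nonneg (typeDist_nonneg v) v
        · exact subset_univ _
    _ ≤ ((n : ℝ) + 1) ^ Fintype.card X * Real.exp (-(n * ε)) := by
        rw [mul_comm]
        gcongr
        exact sum_seqProb_typeDist_le

theorem emp_eq_typeDist (n : ℕ) (ω : ℕ → X) : emp n ω = typeDist fun k : Fin n => ω k := by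
  funext a
  simp only [emp, typeDist, typeCount, card_filter]
  rw [Fin.sum_univ_eq_sum_range (fun k => if ω k = a then 1 else 0) n]

end MethodOfTypes

theorem kl_empirical_concentration_general {X : Type*} [Fintype X] [DecidableEq X] [MeasurableSpace X]
    (Q : X → ℝ) (hQ : IsDist Q)
    (μ : Measure (ℕ → X)) (hiid : IsIID μ Q)
    (n : ℕ) (ε : ℝ) :
    μ {ω | ε ≤ KL (emp n ω) Q} ≤
      ENNReal.ofReal (((n : ℝ) + 1) ^ (Fintype.card X) * Real.exp (-(n * ε))) := by
  have hevent : {ω | ε ≤ KL (emp n ω) Q} =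
      {ω | (fun k : Fin n => ω k) ∈ ({v : Fin n → X | ε ≤ KL (typeDist v) Q} : Finset _)} := by
    ext ω
    simp [emp_eq_typeDist]
  rw [hevent]
  exact (hiid.measure_le_sum_seqProb hQ.1 _).trans
    (ENNReal.ofReal_le_ofReal (sum_seqProb_le_of_le_KL hQ.1 ε))

/-- Concentration of the empirical distribution (Lemma from Cover--Thomas):
if Y_1,...,Y_n are i.i.d. with distribution Q on a finite alphabet, then
P(D(\hat Q_{Y^n} || Q) >= eps) <= (n+1)^{|X|} e^{-n eps}. -/
theorem kl_empirical_concentration {X : Type*} [Fintype X] [DecidableEq X] [MeasurableSpace X]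
    (Q : X → ℝ) (hQ : IsDist Q)
    (μ : Measure (ℕ → X)) (hiid : IsIID μ Q)
    (n : ℕ) (ε : ℝ) (hε : 0 < ε) :
    μ {ω | ε ≤ KL (emp n ω) Q} ≤
      ENNReal.ofReal (((n : ℝ) + 1) ^ (Fintype.card X) * Real.exp (-(n * ε))) :=
  kl_empirical_concentration_general Q hQ μ hiid n ε

end

end AHT
end

section
/- Let Q₀ and Q₁ be probability distributions fully supported on a finite alphabet 𝒳. Then twice the Bhattacharyya distance equals the minimal total KL divergence to the pair: 2B(Q₀,Q₁) = min_{P ∈ 𝒫(𝒳)} [ D(P‖Q₀) + D(P‖Q₁) ], where the minimum is over all probability distributions P on 𝒳. -/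
open MeasureTheory Filter Finset Set Topology
open scoped ENNReal NNReal ENat

namespace AHT

noncomputable section

variable {X : Type*}

/-! Write `s = √(Q₀ Q₁)` and `Z = ∑ s`, so that `B(Q₀, Q₁) = -log Z`. Pointwise,
`P log (P/Q₀) + P log (P/Q₁) = 2 P log (P/(s/Z)) - 2 P log Z`; summing,
`D(P‖Q₀) + D(P‖Q₁) = 2 D(P‖s/Z) + 2 B(Q₀, Q₁)` for every distribution `P`,
and Gibbs' inequality `D(P‖s/Z) ≥ 0`, with equality at `P = s/Z`, identifies the minimum. -/

lemma sub_le_mul_log_div {p r : ℝ} (hp : 0 ≤ p) (hr : 0 < r) :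
    p - r ≤ p * Real.log (p / r) := by
  have h := mul_le_mul_of_nonneg_left (Real.self_sub_one_le_mul_log (div_nonneg hp hr.le)) hr.le
  rwa [mul_sub, mul_div_cancel₀ _ hr.ne', mul_one, ← mul_assoc, mul_div_cancel₀ _ hr.ne'] at h

lemma sum_sub_sum_le_KL [Fintype X] {P R : X → ℝ} (hP : ∀ x, 0 ≤ P x)
    (hR : ∀ x, 0 < R x) : ∑ x, P x - ∑ x, R x ≤ KL P R := by
  rw [← Finset.sum_sub_distrib]
  exact Finset.sum_le_sum fun x _ => sub_le_mul_log_div (hP x) (hR x)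

lemma KL_self [Fintype X] (P : X → ℝ) : KL P P = 0 := by
  refine Finset.sum_eq_zero fun x _ => ?_
  rcases eq_or_ne (P x) 0 with h | h
  · simp [h]
  · simp [div_self h]

def geomMean (Q0 Q1 : X → ℝ) (x : X) : ℝ :=
  Q0 x ^ ((1 : ℝ) / 2) * Q1 x ^ ((1 : ℝ) / 2)

def geomMeanDist [Fintype X] (Q0 Q1 : X → ℝ) (x : X) : ℝ :=
  geomMean Q0 Q1 x / ∑ y, geomMean Q0 Q1 y

section

variable {Q0 Q1 : X → ℝ}

lemma geomMean_pos (hQ0 : ∀ x, 0 < Q0 x) (hQ1 : ∀ x, 0 < Q1 x) (x : X) :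
    0 < geomMean Q0 Q1 x :=
  mul_pos (Real.rpow_pos_of_pos (hQ0 x) _) (Real.rpow_pos_of_pos (hQ1 x) _)

lemma log_geomMean (hQ0 : ∀ x, 0 < Q0 x) (hQ1 : ∀ x, 0 < Q1 x) (x : X) :
    Real.log (geomMean Q0 Q1 x) = (Real.log (Q0 x) + Real.log (Q1 x)) / 2 := by
  rw [geomMean, Real.log_mul (Real.rpow_pos_of_pos (hQ0 x) _).ne'
    (Real.rpow_pos_of_pos (hQ1 x) _).ne', Real.log_rpow (hQ0 x), Real.log_rpow (hQ1 x)]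
  ring

lemma Bhat_eq_neg_log_sum_geomMean [Fintype X] :
    Bhat Q0 Q1 = -Real.log (∑ x, geomMean Q0 Q1 x) := rfl

lemma sum_geomMean_pos [Fintype X] [Nonempty X] (hQ0 : ∀ x, 0 < Q0 x) (hQ1 : ∀ x, 0 < Q1 x) :
    0 < ∑ x, geomMean Q0 Q1 x :=
  Finset.sum_pos (fun x _ => geomMean_pos hQ0 hQ1 x) Finset.univ_nonempty

lemma geomMeanDist_pos [Fintype X] [Nonempty X] (hQ0 : ∀ x, 0 < Q0 x) (hQ1 : ∀ x, 0 < Q1 x)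
    (x : X) : 0 < geomMeanDist Q0 Q1 x :=
  div_pos (geomMean_pos hQ0 hQ1 x) (sum_geomMean_pos hQ0 hQ1)

lemma isDist_geomMeanDist [Fintype X] [Nonempty X] (hQ0 : ∀ x, 0 < Q0 x) (hQ1 : ∀ x, 0 < Q1 x) :
    IsDist (geomMeanDist Q0 Q1) := by
  refine ⟨fun x => (geomMeanDist_pos hQ0 hQ1 x).le, ?_⟩
  simp only [geomMeanDist, ← Finset.sum_div, div_self (sum_geomMean_pos hQ0 hQ1).ne']

lemma KL_add_KL_eq [Fintype X] (hQ0 : ∀ x, 0 < Q0 x) (hQ1 : ∀ x, 0 < Q1 x) (P : X → ℝ) :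
    KL P Q0 + KL P Q1 = 2 * KL P (geomMeanDist Q0 Q1) + 2 * Bhat Q0 Q1 * ∑ x, P x := by
  simp only [KL, Bhat_eq_neg_log_sum_geomMean, Finset.mul_sum, ← Finset.sum_add_distrib]
  refine Finset.sum_congr rfl fun x _ => ?_
  rcases eq_or_ne (P x) 0 with hP | hP
  · simp [hP]
  have : Nonempty X := ⟨x⟩
  rw [Real.log_div hP (hQ0 x).ne', Real.log_div hP (hQ1 x).ne',
    Real.log_div hP (geomMeanDist_pos hQ0 hQ1 x).ne', geomMeanDist,
    Real.log_div (geomMean_pos hQ0 hQ1 x).ne' (sum_geomMean_pos hQ0 hQ1).ne', log_geomMean hQ0 hQ1]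
  ring

end

theorem two_bhattacharyya_eq_min_kl_sum_general {X : Type*} [Fintype X]
    (Q0 Q1 : X → ℝ) (h0 : IsDist Q0)
    (hs0 : ∀ x, 0 < Q0 x) (hs1 : ∀ x, 0 < Q1 x) :
    IsLeast {r : ℝ | ∃ P : X → ℝ, IsDist P ∧ r = KL P Q0 + KL P Q1} (2 * Bhat Q0 Q1) := by
  have : Nonempty X :=
    Finset.univ_nonempty_iff.mp (Finset.nonempty_of_sum_ne_zero (h0.2 ▸ one_ne_zero))
  have hR := isDist_geomMeanDist hs0 hs1
  refine ⟨⟨geomMeanDist Q0 Q1, hR, ?_⟩, ?_⟩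
  · rw [KL_add_KL_eq hs0 hs1, KL_self, hR.2]
    ring
  · rintro r ⟨P, hP, rfl⟩
    have hGibbs := sum_sub_sum_le_KL hP.1 (geomMeanDist_pos hs0 hs1)
    rw [hP.2, hR.2, sub_self] at hGibbs
    rw [KL_add_KL_eq hs0 hs1, hP.2]
    linarith

/-- Twice the Bhattacharyya distance is the minimum over all distributions P
of D(P||Q0) + D(P||Q1), for fully supported Q0, Q1. -/
theorem two_bhattacharyya_eq_min_kl_sum {X : Type*} [Fintype X]
    (Q0 Q1 : X → ℝ) (h0 : IsDist Q0) (h1 : IsDist Q1)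
    (hs0 : ∀ x, 0 < Q0 x) (hs1 : ∀ x, 0 < Q1 x) :
    IsLeast {r : ℝ | ∃ P : X → ℝ, IsDist P ∧ r = KL P Q0 + KL P Q1} (2 * Bhat Q0 Q1) :=
  two_bhattacharyya_eq_min_kl_sum_general Q0 Q1 h0 hs0 hs1

end

end AHT
end

section
/- For every α ∈ (0,1), the test Φ* = (T*, δ*) belongs to 𝒮_D(α): for every i ∈ [M] and every adversary strategy (Ã₁,…,Ã_M) ∈ 𝒮_A(Δ), the error probability satisfies α_i(Φ*, (Ã₁,…,Ã_M)) = P_i(δ* ≠ i) ≤ α. -/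
open MeasureTheory Filter Finset Set Topology
open scoped ENNReal NNReal ENat

namespace AHT

noncomputable section

variable {X : Type*}

/-! ### Auxiliary lemmas -/

lemma summable_exp_neg_rpow015 :
    Summable fun n : ℕ => Real.exp (-((n : ℝ) + 1) ^ (0.15 : ℝ)) := by
  have h2 : Summable fun n : ℕ => 1 / ((n : ℝ)) ^ 2 :=
    Real.summable_one_div_nat_pow.mpr (by norm_num)
  have h3 : Summable fun n : ℕ => 1 / (((n + 1 : ℕ)) : ℝ) ^ 2 :=
    (summable_nat_add_iff (f := fun n : ℕ => 1 / ((n : ℝ)) ^ 2) 1).mpr h2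
  have h4 : Summable fun n : ℕ => ((Nat.factorial 14 : ℝ)) * (1 / ((n : ℝ) + 1) ^ 2) := by
    refine ((h3.congr ?_).mul_left _)
    intro n; push_cast; ring
  refine Summable.of_nonneg_of_le (fun n => (Real.exp_pos _).le) (fun n => ?_) h4
  set y : ℝ := (n : ℝ) + 1 with hy
  have hy1 : (1 : ℝ) ≤ y := by
    have := Nat.cast_nonneg (α := ℝ) n
    simp only [hy]; linarith
  have hy0 : (0 : ℝ) < y := by positivity
  have hx0 : 0 ≤ y ^ (0.15 : ℝ) := Real.rpow_nonneg hy0.le _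
  have h14 : (y ^ (0.15 : ℝ)) ^ (14 : ℕ) / (Nat.factorial 14 : ℝ) ≤ Real.exp (y ^ (0.15 : ℝ)) :=
    Real.pow_div_factorial_le_exp (y ^ (0.15 : ℝ)) hx0 14
  have hpow : (y ^ (0.15 : ℝ)) ^ (14 : ℕ) = y ^ (2.1 : ℝ) := by
    rw [← Real.rpow_natCast (y ^ (0.15 : ℝ)) 14, ← Real.rpow_mul hy0.le]
    norm_num
  have h21 : y ^ (2 : ℕ) ≤ y ^ (2.1 : ℝ) := by
    rw [← Real.rpow_natCast y 2]
    exact Real.rpow_le_rpow_of_exponent_le hy1 (by norm_num)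
  have hfac : (0 : ℝ) < (Nat.factorial 14 : ℝ) := by positivity
  have hle : y ^ (2 : ℕ) / (Nat.factorial 14 : ℝ) ≤ Real.exp (y ^ (0.15 : ℝ)) := by
    refine le_trans ?_ h14
    rw [hpow]
    gcongr
  have hyp : (0 : ℝ) < y ^ (2 : ℕ) / (Nat.factorial 14 : ℝ) := by positivity
  calc Real.exp (-(y ^ (0.15 : ℝ))) = (Real.exp (y ^ (0.15 : ℝ)))⁻¹ := Real.exp_neg _
    _ ≤ (y ^ (2 : ℕ) / (Nat.factorial 14 : ℝ))⁻¹ := by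
        exact inv_anti₀ hyp hle
    _ = (Nat.factorial 14 : ℝ) * (1 / y ^ 2) := by
        rw [inv_div]; ring

lemma Cζ_pos : 0 < Cζ :=
  Summable.tsum_pos summable_exp_neg_rpow015 (fun n => (Real.exp_pos _).le) 0 (Real.exp_pos _)

lemma push_isDist [Fintype X] {P : X → ℝ} {A : X → X → ℝ} (hP : IsDist P)
    (hA : RowStoch A) : IsDist (push P A) := by
  constructor
  · intro y
    exact Finset.sum_nonneg fun x _ => mul_nonneg (hP.1 x) (hA.1 x y)
  · calc ∑ y, push P A y = ∑ y, ∑ x, P x * A x y := rfl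
      _ = ∑ x, ∑ y, P x * A x y := Finset.sum_comm
      _ = ∑ x, P x * ∑ y, A x y := by simp [Finset.mul_sum]
      _ = 1 := by simp only [hA.2, mul_one]; exact hP.2

lemma dist_le_one [Fintype X] {P : X → ℝ} (hP : IsDist P) (a : X) : P a ≤ 1 := by
  rw [← hP.2]
  exact Finset.single_le_sum (fun x _ => hP.1 x) (Finset.mem_univ a)

lemma emp_nonneg [Fintype X] [DecidableEq X] (n : ℕ) (ω : ℕ → X) (a : X) :
    0 ≤ emp n ω a := by
  unfold emp; positivity

lemma KL_lower [Fintype X] {e q : X → ℝ} (he : ∀ a, 0 ≤ e a) (hq : ∀ a, 0 < q a)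
    (hq1 : ∀ a, q a ≤ 1) : ∑ a, e a * Real.log (e a) ≤ KL e q := by
  refine Finset.sum_le_sum fun a _ => ?_
  rcases eq_or_lt_of_le (he a) with h | h
  · simp [← h]
  · have hd : Real.log (e a / q a) = Real.log (e a) - Real.log (q a) :=
      Real.log_div h.ne' (hq a).ne'
    have hlq : Real.log (q a) ≤ 0 := Real.log_nonpos (hq a).le (hq1 a)
    rw [hd]
    nlinarith [h.le]

lemma Zstat_le [Fintype X] [DecidableEq X] {M : ℕ} (P : Fin M → X → ℝ)
    (hP : ∀ i, IsDist (P i)) (d : (X → ℝ) → (X → ℝ) → ℝ) (Δ : ℝ) {i j : Fin M}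
    (hij : i ≠ j) {A : X → X → ℝ} (hA : A ∈ Adm d Δ (P i)) (n : ℕ) (ω : ℕ → X) :
    Zstat P d Δ j n ω ≤ KL (emp n ω) (push (P i) A) := by
  refine csInf_le ⟨∑ a, emp n ω a * Real.log (emp n ω a), ?_⟩ ⟨i, hij, A, hA, rfl⟩
  rintro r ⟨k, hk, B, hB, rfl⟩
  have hdist := push_isDist (hP k) hB.1
  exact KL_lower (emp_nonneg n ω) hB.2.2 (dist_le_one hdist)

/-- Count of occurrences of `a` in the word `v`. -/
def cnt [Fintype X] [DecidableEq X] {n : ℕ} (v : Fin n → X) (a : X) : ℕ :=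
  (Finset.univ.filter fun k => v k = a).card

/-- Type (empirical distribution) of the word `v`. -/
def typeD [Fintype X] [DecidableEq X] {n : ℕ} (v : Fin n → X) (a : X) : ℝ :=
  (cnt v a : ℝ) / n

lemma cnt_le [Fintype X] [DecidableEq X] {n : ℕ} (v : Fin n → X) (a : X) :
    cnt v a ≤ n := by
  refine le_trans (Finset.card_filter_le _ _) ?_
  simp

lemma sum_cnt [Fintype X] [DecidableEq X] {n : ℕ} (v : Fin n → X) :
    ∑ a, cnt v a = n := by
  have h := Finset.card_eq_sum_card_fiberwise
    (f := v) (s := (Finset.univ : Finset (Fin n))) (t := Finset.univ)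
    (fun x _ => Finset.mem_univ _)
  simpa [cnt] using h.symm

lemma emp_eq_typeD [Fintype X] [DecidableEq X] {n : ℕ} {ω : ℕ → X} {v : Fin n → X}
    (h : ∀ k : Fin n, ω (k : ℕ) = v k) : emp n ω = typeD v := by
  funext a
  unfold emp typeD cnt
  congr 2
  rw [Finset.card_filter, Finset.card_filter,
    ← Fin.sum_univ_eq_sum_range (fun k => if ω k = a then 1 else 0) n]
  exact Finset.sum_congr rfl fun k _ => by rw [h k]

lemma sum_comp_cnt [Fintype X] [DecidableEq X] {n : ℕ} (v : Fin n → X) (f : X → ℝ) :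
    ∑ k, f (v k) = ∑ a, (cnt v a : ℝ) * f a := by
  rw [← Finset.sum_fiberwise_of_maps_to (g := v)
    (fun k _ => Finset.mem_univ (v k)) (fun k => f (v k))]
  refine Finset.sum_congr rfl fun a _ => ?_
  rw [Finset.sum_congr rfl (fun k hk => by rw [(Finset.mem_filter.mp hk).2]),
    Finset.sum_const, nsmul_eq_mul]
  rfl

lemma typeD_pos [Fintype X] [DecidableEq X] {n : ℕ} (hn : 0 < n) (v : Fin n → X)
    (k : Fin n) : 0 < typeD v (v k) := by
  have h : 0 < cnt v (v k) :=
    Finset.card_pos.mpr ⟨k, by simp [Finset.mem_filter]⟩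
  unfold typeD
  have : (0:ℝ) < (cnt v (v k) : ℝ) := by exact_mod_cast h
  positivity

lemma prod_Q_eq [Fintype X] [DecidableEq X] {n : ℕ} (hn : 0 < n) (v : Fin n → X)
    {Q : X → ℝ} (hQ : ∀ a, 0 < Q a) :
    ∏ k, Q (v k) = Real.exp (-(n : ℝ) * KL (typeD v) Q) * ∏ k, typeD v (v k) := by
  have hT : ∀ k, 0 < typeD v (v k) := typeD_pos hn v
  have hPQ : 0 < ∏ k, Q (v k) := Finset.prod_pos fun k _ => hQ _
  have hPT : 0 < ∏ k : Fin n, typeD v (v k) := Finset.prod_pos fun k _ => hT k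
  have hn0 : ((n : ℝ)) ≠ 0 := by positivity
  have key : ∀ a, (cnt v a : ℝ) * Real.log (Q a)
      = (cnt v a : ℝ) * Real.log (typeD v a)
        - (n : ℝ) * (typeD v a * Real.log (typeD v a / Q a)) := by
    intro a
    rcases Nat.eq_zero_or_pos (cnt v a) with h | h
    · simp [h, typeD]
    · have hTa : 0 < typeD v a := by
        unfold typeD
        have : (0:ℝ) < (cnt v a : ℝ) := by exact_mod_cast h
        positivity
      have hnT : (n : ℝ) * typeD v a = (cnt v a : ℝ) := by
        unfold typeD; field_simp
      rw [Real.log_div hTa.ne' (hQ a).ne', ← hnT]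
      ring
  have hlog : Real.log (∏ k, Q (v k))
      = Real.log (∏ k : Fin n, typeD v (v k)) + (-(n : ℝ) * KL (typeD v) Q) := by
    rw [Real.log_prod (fun k _ => (hQ _).ne'),
      Real.log_prod (fun k _ => (hT k).ne'),
      sum_comp_cnt v (fun a => Real.log (Q a)),
      sum_comp_cnt v (fun a => Real.log (typeD v a))]
    unfold KL
    rw [Finset.sum_congr rfl (fun a _ => key a), Finset.sum_sub_distrib,
      ← Finset.mul_sum]
    ring
  calc ∏ k, Q (v k) = Real.exp (Real.log (∏ k, Q (v k))) := (Real.exp_log hPQ).symm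
    _ = Real.exp (Real.log (∏ k : Fin n, typeD v (v k)) + (-(n : ℝ) * KL (typeD v) Q)) := by
        rw [hlog]
    _ = Real.exp (-(n : ℝ) * KL (typeD v) Q) * ∏ k, typeD v (v k) := by
        rw [Real.exp_add, Real.exp_log hPT]; ring

lemma sum_prod_typeD_le [Fintype X] [DecidableEq X] {n : ℕ} (hn : 0 < n) :
    ∑ v : Fin n → X, ∏ k, typeD v (v k) ≤ ((n : ℝ) + 1) ^ (Fintype.card X) := by
  classical
  have hn0 : ((n : ℝ)) ≠ 0 := by positivity
  rw [← Finset.sum_fiberwise_of_maps_to (g := fun v : Fin n → X => cnt v)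
    (t := Finset.univ.image fun v : Fin n → X => cnt v)
    (fun v _ => Finset.mem_image_of_mem _ (Finset.mem_univ v))
    (fun v => ∏ k, typeD v (v k))]
  have step1 : ∀ c ∈ Finset.univ.image fun v : Fin n → X => cnt v,
      (∑ v ∈ Finset.univ.filter fun v : Fin n → X => cnt v = c,
        ∏ k, typeD v (v k)) ≤ 1 := by
    intro c hc
    obtain ⟨v₀, -, rfl⟩ := Finset.mem_image.mp hc
    have hsum : ∑ x, (cnt v₀ x : ℝ) / n = 1 := by
      rw [← Finset.sum_div]
      rw [show (∑ x, (cnt v₀ x : ℝ)) = (n : ℝ) by exact_mod_cast sum_cnt v₀]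
      field_simp
    calc ∑ v ∈ Finset.univ.filter fun v : Fin n → X => cnt v = cnt v₀,
          ∏ k, typeD v (v k)
        = ∑ v ∈ Finset.univ.filter fun v : Fin n → X => cnt v = cnt v₀,
          ∏ k, (cnt v₀ (v k) : ℝ) / n := by
          refine Finset.sum_congr rfl fun v hv => ?_
          have hcv : cnt v = cnt v₀ := (Finset.mem_filter.mp hv).2
          exact Finset.prod_congr rfl fun k _ => by rw [typeD, hcv]
      _ ≤ ∑ v : Fin n → X, ∏ k, (cnt v₀ (v k) : ℝ) / n :=
          Finset.sum_le_sum_of_subset_of_nonneg (Finset.filter_subset _ _)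
            (fun v _ _ => Finset.prod_nonneg fun k _ => by positivity)
      _ = ∏ k : Fin n, ∑ x : X, (cnt v₀ x : ℝ) / n := by
          rw [Finset.prod_univ_sum (fun _ : Fin n => (Finset.univ : Finset X))
            (fun _ x => (cnt v₀ x : ℝ) / n), Fintype.piFinset_univ]
      _ = 1 := by rw [Finset.prod_congr rfl fun k _ => hsum, Finset.prod_const_one]
  have hcard : ((Finset.univ.image fun v : Fin n → X => cnt v).card : ℝ)
      ≤ ((n : ℝ) + 1) ^ (Fintype.card X) := by
    have h1 : (Finset.univ.image fun v : Fin n → X => cnt v).card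
        ≤ (Finset.univ : Finset (X → Fin (n + 1))).card := by
      refine Finset.card_le_card_of_injOn
        (fun c a => (⟨min (c a) n, Nat.lt_succ_of_le (min_le_right _ _)⟩ : Fin (n + 1)))
        (fun c _ => Finset.mem_univ _) ?_
      intro c hc c' hc' h
      obtain ⟨v, -, rfl⟩ := Finset.mem_image.mp hc
      obtain ⟨v', -, rfl⟩ := Finset.mem_image.mp hc'
      funext a
      have h1 : min (cnt v a) n = cnt v a := min_eq_left (cnt_le v a)
      have h2 : min (cnt v' a) n = cnt v' a := min_eq_left (cnt_le v' a)
      have := congrFun h a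
      rw [Fin.mk.injEq] at this
      rwa [h1, h2] at this
    have h2 : ((Finset.univ : Finset (X → Fin (n + 1))).card) = (n + 1) ^ (Fintype.card X) := by
      rw [Finset.card_univ, Fintype.card_fun, Fintype.card_fin]
    calc ((Finset.univ.image fun v : Fin n → X => cnt v).card : ℝ)
        ≤ (((n + 1) ^ (Fintype.card X) : ℕ) : ℝ) := by exact_mod_cast h2 ▸ h1
      _ = ((n : ℝ) + 1) ^ (Fintype.card X) := by push_cast; ring
  calc ∑ c ∈ Finset.univ.image fun v : Fin n → X => cnt v,
        ∑ v ∈ Finset.univ.filter fun v : Fin n → X => cnt v = c, ∏ k, typeD v (v k)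
      ≤ ∑ c ∈ Finset.univ.image fun v : Fin n → X => cnt v, (1 : ℝ) :=
        Finset.sum_le_sum step1
    _ = ((Finset.univ.image fun v : Fin n → X => cnt v).card : ℝ) := by
        rw [Finset.sum_const, nsmul_eq_mul, mul_one]
    _ ≤ ((n : ℝ) + 1) ^ (Fintype.card X) := hcard

lemma measure_KL_ge_le [Fintype X] [DecidableEq X] [MeasurableSpace X]
    (μ : Measure (ℕ → X)) {Q : X → ℝ} (hQpos : ∀ a, 0 < Q a)
    (hiid : IsIID μ Q) {n : ℕ} (hn : 0 < n) (γ : ℝ) :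
    μ {ω | γ ≤ KL (emp n ω) Q} ≤
      ENNReal.ofReal (Real.exp (-(n : ℝ) * γ) * ((n : ℝ) + 1) ^ (Fintype.card X)) := by
  classical
  set bad : Finset (Fin n → X) := Finset.univ.filter fun v => γ ≤ KL (typeD v) Q with hbad
  have hsub : {ω : ℕ → X | γ ≤ KL (emp n ω) Q}
      ⊆ ⋃ v ∈ bad, {ω : ℕ → X | ∀ k : Fin n, ω (k : ℕ) = v k} := by
    intro ω hω
    refine Set.mem_iUnion₂.mpr ⟨fun k : Fin n => ω (k : ℕ), ?_, fun k => rfl⟩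
    rw [hbad, Finset.mem_filter]
    refine ⟨Finset.mem_univ _, ?_⟩
    rwa [← emp_eq_typeD (fun k => rfl)]
  calc μ {ω | γ ≤ KL (emp n ω) Q}
      ≤ μ (⋃ v ∈ bad, {ω : ℕ → X | ∀ k : Fin n, ω (k : ℕ) = v k}) := measure_mono hsub
    _ ≤ ∑ v ∈ bad, μ {ω : ℕ → X | ∀ k : Fin n, ω (k : ℕ) = v k} :=
        measure_biUnion_finset_le _ _
    _ = ∑ v ∈ bad, ENNReal.ofReal (∏ k, Q (v k)) :=
        Finset.sum_congr rfl fun v _ => hiid.2 n v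
    _ = ENNReal.ofReal (∑ v ∈ bad, ∏ k, Q (v k)) :=
        (ENNReal.ofReal_sum_of_nonneg fun v _ =>
          Finset.prod_nonneg fun k _ => (hQpos _).le).symm
    _ ≤ _ := by
        apply ENNReal.ofReal_le_ofReal
        have htnn : ∀ v : Fin n → X, 0 ≤ ∏ k, typeD v (v k) := fun v =>
          Finset.prod_nonneg fun k _ => by unfold typeD; positivity
        calc ∑ v ∈ bad, ∏ k, Q (v k)
            = ∑ v ∈ bad, Real.exp (-(n : ℝ) * KL (typeD v) Q) * ∏ k, typeD v (v k) :=
              Finset.sum_congr rfl fun v _ => prod_Q_eq hn v hQpos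
          _ ≤ ∑ v ∈ bad, Real.exp (-(n : ℝ) * γ) * ∏ k, typeD v (v k) := by
              refine Finset.sum_le_sum fun v hv => ?_
              have hγ : γ ≤ KL (typeD v) Q := by
                have := Finset.mem_filter.mp (hbad ▸ hv)
                exact this.2
              have hnn : (0:ℝ) ≤ (n : ℝ) := by positivity
              have hexp : Real.exp (-(n : ℝ) * KL (typeD v) Q)
                  ≤ Real.exp (-(n : ℝ) * γ) := by
                apply Real.exp_le_exp.mpr
                nlinarith
              exact mul_le_mul_of_nonneg_right hexp (htnn v)
          _ = Real.exp (-(n : ℝ) * γ) * ∑ v ∈ bad, ∏ k, typeD v (v k) :=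
              (Finset.mul_sum _ _ _).symm
          _ ≤ Real.exp (-(n : ℝ) * γ) * (((n : ℝ) + 1) ^ (Fintype.card X)) := by
              refine mul_le_mul_of_nonneg_left ?_ (Real.exp_pos _).le
              refine le_trans (Finset.sum_le_sum_of_subset_of_nonneg
                (Finset.filter_subset _ _) fun v _ _ => htnn v) (sum_prod_typeD_le hn)

lemma gamma_eval {K Mn : ℕ} (hM : 2 ≤ Mn) {α : ℝ} (hα : 0 < α) {n : ℕ} (hn : 0 < n) :
    Real.exp (-(n : ℝ) * gammaTh K Mn α n) * ((n : ℝ) + 1) ^ K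
      = α / Cζ / ((Mn : ℝ) - 1) * Real.exp (-(n : ℝ) ^ (0.15 : ℝ)) := by
  have hC : (0:ℝ) < Cζ := Cζ_pos
  have hn0 : (0 : ℝ) < (n : ℝ) := by exact_mod_cast hn
  have hM1 : (0 : ℝ) < (Mn : ℝ) - 1 := by
    have : (2 : ℝ) ≤ (Mn : ℝ) := by exact_mod_cast hM
    linarith
  have h085 : (n : ℝ) ^ (0.15 : ℝ) = (n : ℝ) / (n : ℝ) ^ (0.85 : ℝ) := by
    rw [show (0.15 : ℝ) = 1 - 0.85 by norm_num, Real.rpow_sub hn0, Real.rpow_one]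
  have e1 : (n : ℝ) * (Real.log (Cζ / α) / (n : ℝ)) = Real.log (Cζ / α) :=
    mul_div_cancel₀ _ hn0.ne'
  have e2 : (n : ℝ) * (1 / (n : ℝ) ^ (0.85 : ℝ)) = (n : ℝ) ^ (0.15 : ℝ) := by
    rw [mul_one_div, ← h085]
  have e3 : (n : ℝ) * (((K : ℝ) * Real.log ((n : ℝ) + 1) + Real.log ((Mn : ℝ) - 1)) / (n : ℝ))
      = (K : ℝ) * Real.log ((n : ℝ) + 1) + Real.log ((Mn : ℝ) - 1) :=
    mul_div_cancel₀ _ hn0.ne'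
  have hexp : -(n : ℝ) * gammaTh K Mn α n
      = (-Real.log (Cζ / α)) + (-(n : ℝ) ^ (0.15 : ℝ))
        + (-((K : ℝ) * Real.log ((n : ℝ) + 1))) + (-Real.log ((Mn : ℝ) - 1)) := by
    unfold gammaTh
    rw [neg_mul, mul_add, mul_add, e1, e2, e3]
    ring
  rw [hexp, Real.exp_add, Real.exp_add, Real.exp_add]
  have f1 : Real.exp (-Real.log (Cζ / α)) = α / Cζ := by
    rw [Real.exp_neg, Real.exp_log (div_pos hC hα), inv_div]
  have f2 : Real.exp (-((K : ℝ) * Real.log ((n : ℝ) + 1))) = (((n : ℝ) + 1) ^ K)⁻¹ := by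
    rw [Real.exp_neg, Real.exp_nat_mul, Real.exp_log (by positivity : (0:ℝ) < (n:ℝ) + 1)]
  have f3 : Real.exp (-Real.log ((Mn : ℝ) - 1)) = ((Mn : ℝ) - 1)⁻¹ := by
    rw [Real.exp_neg, Real.exp_log hM1]
  rw [f1, f2, f3]
  have hpow : ((n : ℝ) + 1) ^ K ≠ 0 := by positivity
  field_simp

/-- for every α ∈ (0,1), the test Φ* = (T*, δ*) belongs to 𝒮_D(α):
under H_i and any admissible adversary strategy, the probability that the decision
differs from i (i.e. some wrong one-sided test T_j, j ≠ i, stops no later than T_i)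
is at most α. -/
theorem PhiStar_mem_SD {X : Type*} [Fintype X] [DecidableEq X] [MeasurableSpace X]
    {M : ℕ} (hM : 2 ≤ M) (P : Fin M → X → ℝ) (hP : ∀ i, IsDist (P i))
    (hPd : ∀ i j, i ≠ j → P i ≠ P j)
    (d : (X → ℝ) → (X → ℝ) → ℝ) (Δ : ℝ) (hΔ : 0 < Δ)
    (α : ℝ) (hα0 : 0 < α) (hα1 : α < 1)
    (Atil : Fin M → X → X → ℝ) (hAtil : ∀ i, Atil i ∈ Adm d Δ (P i))
    (μ : Fin M → Measure (ℕ → X)) (hμ : ∀ i, IsIID (μ i) (push (P i) (Atil i)))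
    (i : Fin M) :
    μ i {ω | ∃ j, j ≠ i ∧ Ti P d Δ α j ω ≤ Ti P d Δ α i ω ∧ Ti P d Δ α j ω ≠ ⊤} ≤
      ENNReal.ofReal α := by
  classical
  set Q : X → ℝ := push (P i) (Atil i) with hQdef
  have hQpos : ∀ a, 0 < Q a := (hAtil i).2.2
  have hiid := hμ i
  have hC : (0:ℝ) < Cζ := Cζ_pos
  set c : ℝ := α / Cζ / ((M : ℝ) - 1) with hc
  have hM1 : (1 : ℝ) ≤ (M : ℝ) - 1 := by
    have : (2 : ℝ) ≤ (M : ℝ) := by exact_mod_cast hM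
    linarith
  have hcnn : 0 ≤ c := by
    rw [hc]
    have : (0:ℝ) < (M:ℝ) - 1 := by linarith
    positivity
  have hsub : {ω : ℕ → X | ∃ j, j ≠ i ∧ Ti P d Δ α j ω ≤ Ti P d Δ α i ω ∧
        Ti P d Δ α j ω ≠ ⊤}
      ⊆ ⋃ m : ℕ, {ω : ℕ → X |
          gammaTh (Fintype.card X) M α (m + 1) ≤ KL (emp (m + 1) ω) Q} := by
    rintro ω ⟨j, hji, -, hne⟩
    have hS : {t : ℕ∞ | ∃ n : ℕ, t = (n : ℕ∞) ∧ 1 ≤ n ∧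
        gammaTh (Fintype.card X) M α n ≤ Zstat P d Δ j n ω}.Nonempty := by
      by_contra h
      rw [Set.not_nonempty_iff_eq_empty] at h
      exact hne (by rw [Ti, h, sInf_empty])
    obtain ⟨t, n, -, hn1, hZ⟩ := hS
    have hZK : Zstat P d Δ j n ω ≤ KL (emp n ω) Q :=
      Zstat_le P hP d Δ (Ne.symm hji) (hAtil i) n ω
    refine Set.mem_iUnion.mpr ⟨n - 1, ?_⟩
    have hrw : n - 1 + 1 = n := Nat.succ_pred_eq_of_pos hn1
    simp only [Set.mem_setOf_eq, hrw]
    exact le_trans hZ hZK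
  refine le_trans (measure_mono hsub) ?_
  refine le_trans (measure_iUnion_le _) ?_
  have hbound : ∀ m : ℕ,
      μ i {ω : ℕ → X | gammaTh (Fintype.card X) M α (m + 1) ≤ KL (emp (m + 1) ω) Q}
        ≤ ENNReal.ofReal (c * Real.exp (-((m : ℝ) + 1) ^ (0.15 : ℝ))) := by
    intro m
    refine le_trans (measure_KL_ge_le (μ i) hQpos hiid (Nat.succ_pos m) _) ?_
    apply le_of_eq
    congr 1
    rw [gamma_eval hM hα0 (Nat.succ_pos m)]
    push_cast
    ring
  refine le_trans (ENNReal.tsum_le_tsum hbound) ?_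
  rw [← ENNReal.ofReal_tsum_of_nonneg
    (fun m => mul_nonneg hcnn (Real.exp_pos _).le)
    (summable_exp_neg_rpow015.mul_left c)]
  rw [show (∑' m : ℕ, c * Real.exp (-((m : ℝ) + 1) ^ (0.15 : ℝ))) = c * Cζ from
    tsum_mul_left]
  apply ENNReal.ofReal_le_ofReal
  have hceq : c * Cζ = α / ((M : ℝ) - 1) := by
    rw [hc]
    field_simp
  rw [hceq]
  exact div_le_self hα0.le hM1

end

end AHT
end

section
/- Assume 𝒮_A(Δ) is compact and fix an adversary strategy (Ã₁,…,Ã_M) ∈ 𝒮_A(Δ), so that under H_i the observations are i.i.d. with distribution P_iÃ_i. Then for every i ∈ [M] and every j ≠ i, as α → 0⁺, min_{A_j∈𝒜_j(Δ)} D(Q̂_{Y^{T*}}‖P_jA_j) → min_{A_j∈𝒜_j(Δ)} D(P_iÃ_i‖P_jA_j) P_i-almost surely, and likewise min_{A_j∈𝒜_j(Δ)} D(Q̂_{Y^{T*−1}}‖P_jA_j) → min_{A_j∈𝒜_j(Δ)} D(P_iÃ_i‖P_jA_j) P_i-almost surely. -/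
open MeasureTheory Filter Finset Set Topology
open scoped ENNReal NNReal ENat

namespace AHT

noncomputable section

variable {X : Type*}

/-!
By the strong law of large numbers the empirical distributions `Q̂_{Yⁿ}` converge almost surely
to the true law `Q = P_i Ã_i`. Every law `P_j A_j` with `A_j` admissible is strictly positive and
these laws form a compact set, so the divergence from that set is a continuous function of the
first argument; hence `min_{A_j} D(Q̂_{Yⁿ} ‖ P_j A_j)` converges to its value at `Q` along every
sequence of times `n → ∞`, and all statistics `Z_{i'}^{(n)}` converge and are bounded. It remains
to see that `T* → ∞` as `α → 0⁺`. By the separation hypothesis `Z_i^{(n)} > ε / 2` eventually,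
while `γ_n → 0`, so `T*` is finite; and `γ_n ≥ log (C / α) / n` exceeds the bounded statistics
for all `n ≤ N` once `α` is small, so `T* > N`.
-/

section KLInf

variable [Fintype X]

def infKL (S : Set (X → ℝ)) (Q : X → ℝ) : ℝ :=
  sInf (KL Q '' S)

lemma mul_log_div_eq_sub {q r : ℝ} (hr : r ≠ 0) :
    q * Real.log (q / r) = q * Real.log q - q * Real.log r := by
  rcases eq_or_ne q 0 with rfl | hq
  · simp
  · rw [Real.log_div hq hr, mul_sub]

lemma continuousOn_KL :
    ContinuousOn (fun p : (X → ℝ) × (X → ℝ) => KL p.1 p.2) {p | ∀ a, p.2 a ≠ 0} := by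
  have hKL : ∀ p ∈ {p : (X → ℝ) × (X → ℝ) | ∀ a, p.2 a ≠ 0}, KL p.1 p.2 =
      ∑ a, (p.1 a * Real.log (p.1 a) - p.1 a * Real.log (p.2 a)) :=
    fun p hp => Finset.sum_congr rfl fun a _ => mul_log_div_eq_sub (hp a)
  refine ContinuousOn.congr ?_ hKL
  refine continuousOn_finsetSum _ fun a _ => ?_
  refine (Real.continuous_mul_log.comp (continuous_apply a |>.comp continuous_fst)).continuousOn.sub
    ((continuous_apply a |>.comp continuous_fst).continuousOn.mul ?_)
  exact ((continuous_apply a).comp continuous_snd).continuousOn.log fun p hp => hp a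

theorem continuous_infKL {S : Set (X → ℝ)} (hS : IsCompact S) (hpos : ∀ R ∈ S, ∀ a, R a ≠ 0) :
    Continuous (infKL S) := by
  have : CompactSpace S := isCompact_iff_compactSpace.1 hS
  have hcont : Continuous (↿fun (Q : X → ℝ) (R : S) => KL Q R) :=
    continuousOn_KL.comp_continuous
      (continuous_fst.prodMk (continuous_subtype_val.comp continuous_snd)) fun p => hpos p.2 p.2.2
  convert (isCompact_univ (X := S)).continuous_sInf hcont using 1
  ext Q
  rw [infKL, Set.image_univ, Set.range_comp', Subtype.range_coe]

lemma le_infKL {S : Set (X → ℝ)} {Q : X → ℝ} {c : ℝ} (hS : S.Nonempty)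
    (h : ∀ R ∈ S, c ≤ KL Q R) : c ≤ infKL S Q :=
  le_csInf (hS.image _) <| by
    rintro _ ⟨R, hR, rfl⟩
    exact h R hR

end KLInf

lemma isCompact_of_isCompact_setOf_forall_mem {ι : Type*} {β : ι → Type*}
    [∀ i, TopologicalSpace (β i)] {s : ∀ i, Set (β i)} (hs : IsCompact {f : ∀ i, β i | ∀ i, f i ∈ s i})
    (hne : {f : ∀ i, β i | ∀ i, f i ∈ s i}.Nonempty) (i : ι) : IsCompact (s i) := by
  have hpi : {f : ∀ i, β i | ∀ i, f i ∈ s i} = Set.univ.pi s := by ext; simp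
  rw [hpi] at hs hne
  simpa only [Set.eval_image_univ_pi hne] using hs.image (continuous_apply i)

section Admissible

variable [Fintype X]

def admLaws (d : (X → ℝ) → (X → ℝ) → ℝ) (Δ : ℝ) (P : X → ℝ) : Set (X → ℝ) :=
  push P '' Adm d Δ P

variable {d : (X → ℝ) → (X → ℝ) → ℝ} {Δ : ℝ} {P : X → ℝ}

lemma isDist_push {A : X → X → ℝ} (hP : IsDist P) (hA : RowStoch A) :
    IsDist (push P A) := by
  refine ⟨fun y => Finset.sum_nonneg fun x _ => mul_nonneg (hP.1 x) (hA.1 x y), ?_⟩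
  unfold push
  rw [Finset.sum_comm]
  simp [← Finset.mul_sum, hA.2, hP.2]

lemma continuous_push (P : X → ℝ) : Continuous (push P) :=
  continuous_pi fun y => continuous_finsetSum _ fun x _ =>
    continuous_const.mul ((continuous_apply y).comp (continuous_apply x))

lemma isCompact_admLaws (h : IsCompact (Adm d Δ P)) : IsCompact (admLaws d Δ P) :=
  h.image (continuous_push P)

lemma pos_of_mem_admLaws {R : X → ℝ} (hR : R ∈ admLaws d Δ P) (a : X) : 0 < R a := by
  obtain ⟨A, hA, rfl⟩ := hR
  exact hA.2.2 a

lemma sInf_KL_adm_eq_infKL (Q : X → ℝ) :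
    sInf {r | ∃ A ∈ Adm d Δ P, r = KL Q (push P A)} = infKL (admLaws d Δ P) Q := by
  congr 1
  ext r
  simp [admLaws, eq_comm]

lemma Zstat_eq_infKL [DecidableEq X] {M : ℕ} (P : Fin M → X → ℝ) (i : Fin M) (n : ℕ)
    (ω : ℕ → X) : Zstat P d Δ i n ω = infKL (⋃ j ≠ i, admLaws d Δ (P j)) (emp n ω) := by
  unfold Zstat infKL
  congr 1
  ext r
  simp [admLaws, eq_comm, and_assoc, exists_and_left]

end Admissible

section OuterMeasure

variable {Ω : Type*} [MeasurableSpace Ω] {μ : Measure Ω} [IsFiniteMeasure μ] {s : Set Ω}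

/-- Carathéodory's criterion for the single test set `univ`; it makes the cylinder events of an
i.i.d. law null measurable whatever the σ-algebra on the alphabet. -/
lemma nullMeasurableSet_of_measure_add_measure_compl_le (h : μ s + μ sᶜ ≤ μ univ) :
    NullMeasurableSet s μ := by
  set T := toMeasurable μ s
  set T' := toMeasurable μ sᶜ
  have hcover : T ∪ T' = univ := Set.eq_univ_of_forall fun x =>
    (em (x ∈ s)).elim (fun hx => Or.inl (subset_toMeasurable μ s hx))
      (fun hx => Or.inr (subset_toMeasurable μ sᶜ hx))
  have hnull : μ (T ∩ T') = 0 := by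
    have hsum := measure_union_add_inter (μ := μ) T (measurableSet_toMeasurable μ sᶜ)
    rw [hcover, measure_toMeasurable, measure_toMeasurable] at hsum
    refine le_antisymm ?_ bot_le
    rw [← ENNReal.add_le_add_iff_left (measure_ne_top μ univ), hsum, add_zero]
    exact h
  have hae : T =ᵐ[μ] s := by
    refine ae_eq_set.2 ⟨?_, ?_⟩
    · exact measure_mono_null (Set.inter_subset_inter_right T (subset_toMeasurable μ sᶜ)) hnull
    · rw [Set.sdiff_eq_empty.2 (subset_toMeasurable μ s), measure_empty]
  exact (measurableSet_toMeasurable μ s).nullMeasurableSet.congr hae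

lemma measure_eq_of_le_of_measure_compl_le {a b : ℝ≥0∞} (hs : μ s ≤ a) (hsc : μ sᶜ ≤ b)
    (hab : a + b ≤ μ univ) : μ s = a := by
  have hb : b ≠ ⊤ := ne_top_of_le_ne_top (measure_ne_top μ univ) (le_add_self.trans hab)
  refine le_antisymm hs ((ENNReal.add_le_add_iff_right hb).1 ?_)
  exact (hab.trans (measure_univ_le_add_compl s)).trans (add_le_add le_rfl hsc)

end OuterMeasure

section IID

variable [Fintype X] [MeasurableSpace X] {μ : Measure (ℕ → X)} {Q : X → ℝ}

lemma IsIID.sum_measure_cylinder (h : IsIID μ Q) (hQ : IsDist Q) {n : ℕ} (t : Fin n → Finset X) :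
    ∑ v ∈ Fintype.piFinset t, μ {ω | ∀ k : Fin n, ω k = v k} =
      ENNReal.ofReal (∏ k, ∑ x ∈ t k, Q x) := by
  rw [Finset.sum_congr rfl fun v _ => h.2 n v, Finset.prod_univ_sum,
    ENNReal.ofReal_sum_of_nonneg fun v _ => Finset.prod_nonneg fun k _ => hQ.1 _]

theorem IsIID.measure_forall_mem (h : IsIID μ Q) (hQ : IsDist Q) (I : Finset ℕ)
    (s : ℕ → Finset X) :
    NullMeasurableSet {ω | ∀ k ∈ I, ω k ∈ s k} μ ∧
      μ {ω | ∀ k ∈ I, ω k ∈ s k} = ENNReal.ofReal (∏ k ∈ I, ∑ x ∈ s k, Q x) := by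
  classical
  have : IsProbabilityMeasure μ := h.1
  obtain ⟨n, hI⟩ := I.exists_nat_subset_range
  set cyl : (Fin n → X) → Set (ℕ → X) := fun v => {ω | ∀ k : Fin n, ω k = v k}
  set t : Fin n → Finset X := fun k => if (k : ℕ) ∈ I then s k else univ
  set F := Fintype.piFinset t
  set E := {ω : ℕ → X | ∀ k ∈ I, ω k ∈ s k}
  have hmem : ∀ ω, ω ∈ E ↔ (fun k : Fin n => ω k) ∈ F := fun ω => by
    simp only [E, F, t, Set.mem_ofPred_eq, Fintype.mem_piFinset]
    refine ⟨fun hω k => ?_, fun hω k hk => ?_⟩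
    · split_ifs with hk
      exacts [hω k hk, Finset.mem_univ _]
    · simpa [hk] using hω ⟨k, Finset.mem_range.1 (hI hk)⟩
  have hcover : ∀ G : Finset (Fin n → X), ∀ ω, (fun k : Fin n => ω k) ∈ G → ω ∈ ⋃ v ∈ G, cyl v :=
    fun G ω hω => Set.mem_biUnion hω fun k => rfl
  -- `E` and `Eᶜ` are covered by complementary families of cylinders of total mass one.
  have hE : μ E ≤ ∑ v ∈ F, μ (cyl v) :=
    (measure_mono fun ω hω => hcover F ω ((hmem ω).1 hω)).trans (measure_biUnion_finset_le _ _)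
  have hEc : μ Eᶜ ≤ ∑ v ∈ Fᶜ, μ (cyl v) :=
    (measure_mono fun ω (hω : ω ∉ E) =>
      hcover Fᶜ ω (Finset.mem_compl.2 fun hF => hω ((hmem ω).2 hF))).trans
        (measure_biUnion_finset_le _ _)
  have htotal : ∑ v ∈ F, μ (cyl v) + ∑ v ∈ Fᶜ, μ (cyl v) = μ univ := by
    rw [Finset.sum_add_sum_compl, ← Fintype.piFinset_univ, h.sum_measure_cylinder hQ]
    simp [hQ.2]
  have hprod : ∏ k, ∑ x ∈ t k, Q x = ∏ k ∈ I, ∑ x ∈ s k, Q x := by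
    rw [Fin.prod_univ_eq_prod_range (fun m => ∑ x ∈ if m ∈ I then s m else univ, Q x)]
    refine (Finset.prod_subset hI fun m _ hm => by simp [hm, hQ.2]).symm.trans ?_
    exact Finset.prod_congr rfl fun m hm => by simp [hm]
  rw [h.sum_measure_cylinder hQ, hprod] at hE htotal
  exact ⟨nullMeasurableSet_of_measure_add_measure_compl_le
      ((add_le_add hE hEc).trans htotal.le),
    measure_eq_of_le_of_measure_compl_le hE hEc htotal.le⟩

end IID

section SLLN

open ProbabilityTheory

variable [Fintype X] [MeasurableSpace X] {μ : Measure (ℕ → X)} {Q : X → ℝ}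

lemma IsIID.measure_coord_mem (h : IsIID μ Q) (hQ : IsDist Q) (k : ℕ) (S : Finset X) :
    NullMeasurableSet {ω : ℕ → X | ω k ∈ S} μ ∧
      μ {ω | ω k ∈ S} = ENNReal.ofReal (∑ x ∈ S, Q x) := by
  simpa using h.measure_forall_mem hQ {k} fun _ => S

lemma IsIID.measure_coord_mem_inter (h : IsIID μ Q) (hQ : IsDist Q) {k l : ℕ} (hkl : k ≠ l)
    (S S' : Finset X) :
    μ ({ω | ω k ∈ S} ∩ {ω | ω l ∈ S'}) = μ {ω | ω k ∈ S} * μ {ω | ω l ∈ S'} := by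
  have hpair := (h.measure_forall_mem hQ {k, l} fun m => if m = k then S else S').2
  rw [Finset.prod_pair hkl, if_pos rfl, if_neg hkl.symm,
    ENNReal.ofReal_mul (Finset.sum_nonneg fun x _ => hQ.1 x)] at hpair
  rw [(h.measure_coord_mem hQ k S).2, (h.measure_coord_mem hQ l S').2, ← hpair]
  congr 1
  ext ω
  simp [hkl.symm]

theorem IsIID.ae_tendsto_emp [DecidableEq X] (h : IsIID μ Q) (hQ : IsDist Q) :
    ∀ᵐ ω ∂μ, Tendsto (fun n => emp n ω) atTop (𝓝 Q) := by
  classical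
  have : IsProbabilityMeasure μ := h.1
  simp_rw [tendsto_pi_nhds]
  refine ae_all_iff.2 fun a => ?_
  set f : ℕ → (ℕ → X) → ℝ := fun k ω => if ω k = a then 1 else 0
  have hpre : ∀ k (B : Set ℝ),
      f k ⁻¹' B = {ω | ω k ∈ Finset.univ.filter fun x => (if x = a then (1 : ℝ) else 0) ∈ B} := by
    intro k B
    ext ω
    simp [f]
  have hmeas : ∀ k, AEStronglyMeasurable (f k) μ := fun k =>
    (NullMeasurable.aemeasurable fun B _ => hpre k B ▸ (h.measure_coord_mem hQ k _).1)
      |>.aestronglyMeasurable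
  have hident : ∀ k, IdentDistrib (f k) (f 0) μ μ := fun k =>
    ⟨(hmeas k).aemeasurable, (hmeas 0).aemeasurable, Measure.ext fun B hB => by
      rw [Measure.map_apply_of_aemeasurable (hmeas k).aemeasurable hB,
        Measure.map_apply_of_aemeasurable (hmeas 0).aemeasurable hB, hpre, hpre,
        (h.measure_coord_mem hQ k _).2, (h.measure_coord_mem hQ 0 _).2]⟩
  have hindep : Pairwise fun k l => IndepFun (f k) (f l) μ := fun k l hkl =>
    indepFun_iff_measure_inter_preimage_eq_mul.2 fun B B' _ _ => by
      rw [hpre, hpre, h.measure_coord_mem_inter hQ hkl]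
  have hind : f 0 = {ω | ω 0 ∈ ({a} : Finset X)}.indicator fun _ => 1 := by
    ext ω
    simp [f, Set.indicator]
  have hint : Integrable (f 0) μ := by
    rw [hind]
    exact (integrable_const 1).indicator₀ (h.measure_coord_mem hQ 0 _).1
  have hmean : ∫ ω, f 0 ω ∂μ = Q a := by
    rw [hind, integral_indicator₀ (h.measure_coord_mem hQ 0 _).1, setIntegral_const,
      measureReal_def, (h.measure_coord_mem hQ 0 _).2]
    simp [hQ.1 a]
  filter_upwards [strong_law_ae_real f hint hindep hident] with ω hω
  rw [hmean] at hω
  refine hω.congr fun n => ?_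
  simp [emp, f, Finset.sum_boole]

end SLLN

lemma summable_exp_neg_rpow {p : ℝ} (hp : 0 < p) :
    Summable fun n : ℕ => Real.exp (-(n : ℝ) ^ p) := by
  have hlim : Tendsto (fun n : ℕ => Real.exp (-(n : ℝ) ^ p) / ((n : ℝ) ^ 2)⁻¹) atTop (𝓝 0) := by
    have h := (tendsto_rpow_mul_exp_neg_mul_atTop_nhds_zero (2 / p) 1 one_pos).comp
      ((tendsto_rpow_atTop hp).comp tendsto_natCast_atTop_atTop)
    refine h.congr fun n => ?_
    rw [Function.comp_apply, Function.comp_apply, ← Real.rpow_mul (Nat.cast_nonneg n),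
      mul_div_cancel₀ _ hp.ne', Real.rpow_two, neg_one_mul, div_inv_eq_mul, mul_comm]
  have hzero : ∀ᶠ n : ℕ in atTop, ((n : ℝ) ^ 2)⁻¹ = 0 → Real.exp (-(n : ℝ) ^ p) = 0 :=
    (eventually_ne_atTop 0).mono fun n hn h => absurd h (by positivity)
  exact summable_of_isBigO_nat (Real.summable_nat_pow_inv.2 one_lt_two)
    ((Asymptotics.isLittleO_iff_tendsto' hzero).2 hlim).isBigO

lemma tendsto_log_div_nhdsGT_zero {c : ℝ} (hc : 0 < c) :
    Tendsto (fun α : ℝ => Real.log (c / α)) (𝓝[>] 0) atTop :=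
  Real.tendsto_log_atTop.comp <|
    (tendsto_inv_nhdsGT_zero.const_mul_atTop hc).congr fun α => (div_eq_mul_inv c α).symm

lemma tendsto_gammaTh (K M : ℕ) (α : ℝ) : Tendsto (gammaTh K M α) atTop (𝓝 0) := by
  have hlog : Tendsto (fun n : ℕ => Real.log ((n : ℝ) + 1) / n) atTop (𝓝 0) := by
    have h := (Real.tendsto_pow_log_div_mul_add_atTop 1 (-1) 1 one_ne_zero).comp
      (tendsto_atTop_add_const_right atTop (1 : ℝ) tendsto_natCast_atTop_atTop)
    refine h.congr fun n => ?_
    simp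
  have hpow : Tendsto (fun n : ℕ => 1 / (n : ℝ) ^ (0.85 : ℝ)) atTop (𝓝 0) := by
    refine ((tendsto_rpow_atTop (by norm_num : (0 : ℝ) < 0.85)).comp
      tendsto_natCast_atTop_atTop).inv_tendsto_atTop.congr fun n => ?_
    simp
  have h := ((tendsto_const_div_atTop_nhds_zero_nat (Real.log (Cζ / α))).add hpow).add
    ((hlog.const_mul (K : ℝ)).add (tendsto_const_div_atTop_nhds_zero_nat (Real.log (M - 1))))
  simp only [add_zero, mul_zero] at h
  exact h.congr fun n => by simp only [gammaTh]; ring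

lemma log_div_le_gammaTh (K : ℕ) {M : ℕ} (hM : 0 < M) (α : ℝ) (n : ℕ) :
    Real.log (Cζ / α) / n ≤ gammaTh K M α n := by
  have hM1 : ((M : ℝ) - 1) = ((M - 1 : ℕ) : ℝ) := by rw [Nat.cast_sub hM, Nat.cast_one]
  have hrest : 0 ≤ ((K : ℝ) * Real.log ((n : ℝ) + 1) + Real.log ((M : ℝ) - 1)) / n := by
    rw [hM1]
    have := Real.log_natCast_nonneg (M - 1)
    have := Real.log_nonneg (by linarith [(Nat.cast_nonneg n : (0 : ℝ) ≤ n)] : (1 : ℝ) ≤ n + 1)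
    positivity
  have hpow : 0 ≤ 1 / (n : ℝ) ^ (0.85 : ℝ) := by positivity
  unfold gammaTh
  linarith

section StoppingTime

variable [Fintype X] [DecidableEq X] {M : ℕ} {P : Fin M → X → ℝ}
  {d : (X → ℝ) → (X → ℝ) → ℝ} {Δ α : ℝ} {ω : ℕ → X}

lemma Ti_le {i : Fin M} {n : ℕ} (hn : 1 ≤ n)
    (h : gammaTh (Fintype.card X) M α n ≤ Zstat P d Δ i n ω) : Ti P d Δ α i ω ≤ n :=
  sInf_le ⟨n, rfl, hn, h⟩

lemma le_Ti {i : Fin M} {N : ℕ∞}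
    (h : ∀ n : ℕ, 1 ≤ n → gammaTh (Fintype.card X) M α n ≤ Zstat P d Δ i n ω → N ≤ n) :
    N ≤ Ti P d Δ α i ω :=
  le_sInf <| by
    rintro _ ⟨n, rfl, hn, hγ⟩
    exact h n hn hγ

lemma Tstar_ne_top (i : Fin M) {c : ℝ} (hc : 0 < c)
    (hZ : ∀ᶠ n in atTop, c ≤ Zstat P d Δ i n ω) : Tstar P d Δ α ω ≠ ⊤ := by
  obtain ⟨n, ⟨hγ, hZn⟩, hn⟩ := (((tendsto_gammaTh _ M α).eventually_lt_const hc).and hZ).and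
    (eventually_ge_atTop 1) |>.exists
  exact ne_top_of_le_ne_top (ENat.natCast_ne_top n)
    ((iInf_le _ i).trans (Ti_le hn (hγ.le.trans hZn)))

lemma eventually_le_Ti (i : Fin M) (hZ : BddAbove (Set.range fun n => Zstat P d Δ i n ω))
    (N : ℕ) : ∀ᶠ α in 𝓝[>] 0, (N : ℕ∞) ≤ Ti P d Δ α i ω := by
  obtain ⟨L, hL⟩ := hZ
  filter_upwards [(tendsto_log_div_nhdsGT_zero Cζ_pos).eventually_gt_atTop (N * |L|)] with α hα
  refine le_Ti fun n hn hγ => ?_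
  by_contra! hnN
  have hn0 : (0 : ℝ) < n := by exact_mod_cast hn
  have hnN' : (n : ℝ) ≤ N := by exact_mod_cast hnN.le
  have hL' : |L| < Real.log (Cζ / α) / n := by
    rw [lt_div_iff₀ hn0]
    nlinarith [abs_nonneg L]
  linarith [hL ⟨n, rfl⟩, le_abs_self L, log_div_le_gammaTh (Fintype.card X) i.pos α n]

lemma tendsto_Tstar_toNat (i : Fin M) {c : ℝ} (hc : 0 < c)
    (hZ : ∀ᶠ n in atTop, c ≤ Zstat P d Δ i n ω)
    (hbdd : ∀ i, BddAbove (Set.range fun n => Zstat P d Δ i n ω)) :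
    Tendsto (fun α => (Tstar P d Δ α ω).toNat) (𝓝[>] 0) atTop := by
  refine tendsto_atTop.2 fun N => ?_
  filter_upwards [eventually_all.2 fun i => eventually_le_Ti i (hbdd i) N] with α hα
  have hle : (N : ℕ∞) ≤ Tstar P d Δ α ω := le_iInf hα
  simpa using ENat.toNat_le_toNat hle (Tstar_ne_top i hc hZ)

end StoppingTime

section Convergence

variable [Fintype X] [DecidableEq X] {M : ℕ} {P : Fin M → X → ℝ}
  {d : (X → ℝ) → (X → ℝ) → ℝ} {Δ : ℝ} {ω : ℕ → X} {Q : X → ℝ}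

lemma tendsto_infKL_emp {S : Set (X → ℝ)} (hS : IsCompact S) (hpos : ∀ R ∈ S, ∀ a, R a ≠ 0)
    (hω : Tendsto (fun n => emp n ω) atTop (𝓝 Q)) :
    Tendsto (fun n => infKL S (emp n ω)) atTop (𝓝 (infKL S Q)) :=
  ((continuous_infKL hS hpos).tendsto Q).comp hω

lemma tendsto_Zstat (hcpt : ∀ j, IsCompact (Adm d Δ (P j)))
    (hω : Tendsto (fun n => emp n ω) atTop (𝓝 Q)) (i : Fin M) :
    Tendsto (fun n => Zstat P d Δ i n ω) atTop (𝓝 (infKL (⋃ j ≠ i, admLaws d Δ (P j)) Q)) := by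
  simp only [Zstat_eq_infKL]
  refine tendsto_infKL_emp (isCompact_iUnion fun j => isCompact_iUnion fun _ =>
    isCompact_admLaws (hcpt j)) (fun R hR a => ?_) hω
  obtain ⟨j, -, hR⟩ := Set.mem_iUnion₂.1 hR
  exact (pos_of_mem_admLaws hR a).ne'

theorem tendsto_Tstar_toNat_of_tendsto_emp (hcpt : ∀ j, IsCompact (Adm d Δ (P j)))
    (hω : Tendsto (fun n => emp n ω) atTop (𝓝 Q)) (i : Fin M)
    (hQ : 0 < infKL (⋃ j ≠ i, admLaws d Δ (P j)) Q) :
    Tendsto (fun α => (Tstar P d Δ α ω).toNat) (𝓝[>] 0) atTop :=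
  tendsto_Tstar_toNat i (half_pos hQ)
    ((tendsto_Zstat hcpt hω i).eventually_const_le (half_lt_self hQ))
    fun i' => (tendsto_Zstat hcpt hω i').bddAbove_range

end Convergence

theorem empirical_kl_at_Tstar_as_convergence_general {X : Type*} [Fintype X] [DecidableEq X]
    [MeasurableSpace X]
    {M : ℕ} (P : Fin M → X → ℝ) (hP : ∀ i, IsDist (P i))
    (d : (X → ℝ) → (X → ℝ) → ℝ) (Δ : ℝ)
    (hcompact : IsCompact {A : Fin M → X → X → ℝ | ∀ i, A i ∈ Adm d Δ (P i)})
    (ε : ℝ) (hε : 0 < ε)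
    (hsep : ∀ i j, i ≠ j → ∀ Ai ∈ Adm d Δ (P i), ∀ Aj ∈ Adm d Δ (P j),
      ε ≤ KL (push (P i) Ai) (push (P j) Aj))
    (Atil : Fin M → X → X → ℝ) (hAtil : ∀ i, Atil i ∈ Adm d Δ (P i))
    (μ : Fin M → Measure (ℕ → X)) (hμ : ∀ i, IsIID (μ i) (push (P i) (Atil i)))
    (i j : Fin M) (hij : j ≠ i) :
    (∀ᵐ ω ∂(μ i),
      Tendsto (fun α : ℝ => sInf {r : ℝ | ∃ A ∈ Adm d Δ (P j),
          r = KL (emp (Tstar P d Δ α ω).toNat ω) (push (P j) A)})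
        (𝓝[>] (0 : ℝ))
        (𝓝 (sInf {r : ℝ | ∃ A ∈ Adm d Δ (P j),
          r = KL (push (P i) (Atil i)) (push (P j) A)}))) ∧
    (∀ᵐ ω ∂(μ i),
      Tendsto (fun α : ℝ => sInf {r : ℝ | ∃ A ∈ Adm d Δ (P j),
          r = KL (emp ((Tstar P d Δ α ω).toNat - 1) ω) (push (P j) A)})
        (𝓝[>] (0 : ℝ))
        (𝓝 (sInf {r : ℝ | ∃ A ∈ Adm d Δ (P j),
          r = KL (push (P i) (Atil i)) (push (P j) A)}))) := by
  have hcpt : ∀ j, IsCompact (Adm d Δ (P j)) :=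
    isCompact_of_isCompact_setOf_forall_mem hcompact ⟨Atil, hAtil⟩
  have hsepQ : 0 < infKL (⋃ j ≠ i, admLaws d Δ (P j)) (push (P i) (Atil i)) := by
    refine hε.trans_le (le_infKL ⟨_, Set.mem_biUnion hij ⟨Atil j, hAtil j, rfl⟩⟩ ?_)
    rintro _ hR
    obtain ⟨j', hj', A, hA, rfl⟩ := Set.mem_iUnion₂.1 hR
    exact hsep i j' (Ne.symm hj') _ (hAtil i) A hA
  simp only [sInf_KL_adm_eq_infKL]
  refine Filter.eventually_and.1 ?_
  filter_upwards [(hμ i).ae_tendsto_emp (isDist_push (hP i) (hAtil i).1)] with ω hω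
  have hT := tendsto_Tstar_toNat_of_tendsto_emp hcpt hω i hsepQ
  have hKL := tendsto_infKL_emp (isCompact_admLaws (hcpt j))
    (fun R hR a => (pos_of_mem_admLaws hR a).ne') hω
  exact ⟨hKL.comp hT, hKL.comp ((tendsto_sub_atTop_nat 1).comp hT)⟩

/-- almost sure convergence of the minimized empirical KL divergences
evaluated at the stopping time T* (and at T* − 1) as α → 0⁺. -/
theorem empirical_kl_at_Tstar_as_convergence {X : Type*} [Fintype X] [DecidableEq X]
    [MeasurableSpace X]
    {M : ℕ} (hM : 2 ≤ M) (P : Fin M → X → ℝ) (hP : ∀ i, IsDist (P i))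
    (hPd : ∀ i j, i ≠ j → P i ≠ P j)
    (d : (X → ℝ) → (X → ℝ) → ℝ) (Δ : ℝ) (hΔ : 0 < Δ)
    (hcompact : IsCompact {A : Fin M → X → X → ℝ | ∀ i, A i ∈ Adm d Δ (P i)})
    (ε : ℝ) (hε : 0 < ε)
    (hsep : ∀ i j, i ≠ j → ∀ Ai ∈ Adm d Δ (P i), ∀ Aj ∈ Adm d Δ (P j),
      ε ≤ KL (push (P i) Ai) (push (P j) Aj))
    (Atil : Fin M → X → X → ℝ) (hAtil : ∀ i, Atil i ∈ Adm d Δ (P i))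
    (μ : Fin M → Measure (ℕ → X)) (hμ : ∀ i, IsIID (μ i) (push (P i) (Atil i)))
    (i j : Fin M) (hij : j ≠ i) :
    (∀ᵐ ω ∂(μ i),
      Tendsto (fun α : ℝ => sInf {r : ℝ | ∃ A ∈ Adm d Δ (P j),
          r = KL (emp (Tstar P d Δ α ω).toNat ω) (push (P j) A)})
        (𝓝[>] (0 : ℝ))
        (𝓝 (sInf {r : ℝ | ∃ A ∈ Adm d Δ (P j),
          r = KL (push (P i) (Atil i)) (push (P j) A)}))) ∧
    (∀ᵐ ω ∂(μ i),
      Tendsto (fun α : ℝ => sInf {r : ℝ | ∃ A ∈ Adm d Δ (P j),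
          r = KL (emp ((Tstar P d Δ α ω).toNat - 1) ω) (push (P j) A)})
        (𝓝[>] (0 : ℝ))
        (𝓝 (sInf {r : ℝ | ∃ A ∈ Adm d Δ (P j),
          r = KL (push (P i) (Atil i)) (push (P j) A)}))) :=
  empirical_kl_at_Tstar_as_convergence_general P hP d Δ hcompact ε hε hsep Atil hAtil μ hμ i j hij

end

end AHT
end
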